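/- No wheel admits a clique-cutset. That is, if H is a hole (induced cycle of length at least 4) and x a vertex adjacent to at least three vertices of H, then the graph induced on V(H) ∪ {x} has no clique whose removal disconnects it. -/

import Mathlib

open SimpleGraph Set

variable {V : Type*}

def CutPartition (G : SimpleGraph V) (A B C : Set V) : Prop :=
  A.Nonempty ∧ B.Nonempty ∧ Disjoint A B ∧ Disjoint A C ∧ Disjoint B C ∧
    A ∪ B ∪ C = Set.univ ∧ ∀ a ∈ A, ∀ b ∈ B, ¬ G.Adj a b

def CliqueCutPartition (G : SimpleGraph V) (A B C : Set V) : Prop :=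
  CutPartition G A B C ∧ G.IsClique C

def HasCliqueCutset (G : SimpleGraph V) : Prop := ∃ A B C, CliqueCutPartition G A B C

/-!
A clique meets the hole in at most two consecutive vertices `d, d + 1`, because a hole is
triangle-free. The rest of the hole is a path, and each of `d`, `d + 1` and the centre has a
neighbour on that path (the centre because it has at least three neighbours on the hole), so
whatever survives the removal of the clique is connected.
-/

open scoped Fin.CommRing

theorem Fin.cyclic_induction {n : ℕ} [NeZero n] (a : Fin n) {P : Fin n → Prop} (ha : P a)
    (hsucc : ∀ i, i + 1 ≠ a → P i → P (i + 1)) (i : Fin n) : P i := by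
  have hadd : ∀ k < n, P (a + k) := by
    intro k hk
    induction k with
    | zero => simpa using ha
    | succ k ih =>
      have hne : a + k + 1 ≠ a := by
        rw [Ne, add_assoc, add_eq_left, ← Nat.cast_one (R := Fin n), ← Nat.cast_add,
          Fin.natCast_eq_zero]
        exact Nat.not_dvd_of_pos_of_lt k.succ_pos hk
      simpa [add_assoc] using hsucc _ hne (ih (by omega))
  simpa using hadd _ (i - a).isLt

namespace SimpleGraph

variable {W : Type*} {G : SimpleGraph V} {G' : SimpleGraph W}

def Embedding.codRestrict (s : Set W) (f : G ↪g G') (h : ∀ v, f v ∈ s) : G ↪g G'.induce s where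
  toFun v := ⟨f v, h v⟩
  inj' _ _ huv := f.injective (congrArg Subtype.val huv)
  map_rel_iff' := f.map_rel_iff

variable {n : ℕ}

theorem cycleGraph_adj_iff_eq_add_one {u v : Fin (n + 2)} :
    (cycleGraph (n + 2)).Adj u v ↔ u = v + 1 ∨ v = u + 1 := by
  simp only [cycleGraph_adj, sub_eq_iff_eq_add']

theorem cycleGraph_adj_add_one (u : Fin (n + 2)) : (cycleGraph (n + 2)).Adj u (u + 1) :=
  cycleGraph_adj_iff_eq_add_one.2 (Or.inr rfl)

theorem cycleGraph_cliqueFree_three (hn : 2 ≤ n) : (cycleGraph (n + 2)).CliqueFree 3 := by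
  intro s hs
  obtain ⟨a, b, c, -, -, -, rfl⟩ := Finset.card_eq_three.1 hs.card_eq
  obtain ⟨hab, hac, hbc⟩ := is3Clique_triple_iff.1 hs
  have h1 : (1 : Fin (n + 2)) ≠ 0 := by simp
  have h3 : (3 : Fin (n + 2)) ≠ 0 := by
    simp [Fin.ext_iff, Nat.mod_eq_of_lt (show 3 < n + 2 by omega)]
  rw [cycleGraph_adj] at hab hbc hac
  grind

theorem cycleGraph_exists_adj_notMem_pair (hn : 1 ≤ n) {d i : Fin (n + 2)}
    (hi : i ∈ ({d, d + 1} : Set _)) :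
    ∃ j ∉ ({d, d + 1} : Set _), (cycleGraph (n + 2)).Adj i j := by
  have h1 : (1 : Fin (n + 2)) ≠ 0 := by simp
  have h2 : (2 : Fin (n + 2)) ≠ 0 := by
    simp [Fin.ext_iff, Nat.mod_eq_of_lt (show 2 < n + 2 by omega)]
  simp only [mem_insert_iff, mem_singleton_iff, not_or] at hi ⊢
  rcases hi with rfl | rfl
  · refine ⟨i - 1, ⟨fun h => h1 ?_, fun h => h2 ?_⟩,
      cycleGraph_adj_iff_eq_add_one.2 (Or.inl (sub_add_cancel i 1).symm)⟩ <;>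
      linear_combination -h
  · refine ⟨d + 1 + 1, ⟨fun h => h2 ?_, fun h => h1 ?_⟩, cycleGraph_adj_add_one _⟩ <;>
      linear_combination h

theorem IsClique.subset_pair_of_cycleGraph (hn : 2 ≤ n) {s : Set (Fin (n + 2))}
    (hs : (cycleGraph (n + 2)).IsClique s) : ∃ d, s ⊆ {d, d + 1} := by
  by_cases h : ∃ a ∈ s, ∃ b ∈ s, b = a + 1
  · obtain ⟨a, ha, b, hb, rfl⟩ := h
    refine ⟨a, fun c hc => ?_⟩
    by_contra hc'
    simp only [mem_insert_iff, mem_singleton_iff, not_or] at hc'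
    refine cycleGraph_cliqueFree_three hn {a, a + 1, c} (is3Clique_triple_iff.2 ⟨?_, ?_, ?_⟩)
    exacts [cycleGraph_adj_add_one a, hs ha hc (Ne.symm hc'.1), hs hb hc (Ne.symm hc'.2)]
  · push Not at h
    obtain rfl | ⟨a, ha⟩ := s.eq_empty_or_nonempty
    · exact ⟨0, empty_subset _⟩
    refine ⟨a, fun c hc => ?_⟩
    by_contra hc'
    simp only [mem_insert_iff, mem_singleton_iff, not_or] at hc'
    rcases cycleGraph_adj_iff_eq_add_one.1 (hs hc ha hc'.1) with h' | h'
    · exact h a ha c hc h'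
    · exact h c hc a ha h'

end SimpleGraph

namespace CutPartition

variable {G : SimpleGraph V} {A B C : Set V}

theorem mem_iff_of_adj (h : CutPartition G A B C) {u v : V} (huv : G.Adj u v) (hu : u ∉ C)
    (hv : v ∉ C) : u ∈ A ↔ v ∈ A := by
  obtain ⟨-, -, -, -, -, hcover, hnadj⟩ := h
  have hside : ∀ w ∉ C, w ∈ A ∨ w ∈ B := fun w hw => by
    have := hcover ▸ mem_univ w
    grind
  constructor
  · exact fun huA => (hside v hv).resolve_right fun hvB => hnadj u huA v hvB huv
  · exact fun hvA => (hside u hu).resolve_right fun huB => hnadj v hvA u huB huv.symm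

theorem not_forall_mem_iff (h : CutPartition G A B C) (v : V) :
    ¬ ∀ u ∉ C, (u ∈ A ↔ v ∈ A) := by
  obtain ⟨⟨a, ha⟩, ⟨b, hb⟩, hAB, hAC, hBC, -, -⟩ := h
  intro hsame
  have hbA : b ∈ A :=
    (hsame b (hBC.notMem_of_mem_left hb)).2 ((hsame a (hAC.notMem_of_mem_left ha)).1 ha)
  exact hAB.notMem_of_mem_left hbA hb

end CutPartition

theorem not_hasCliqueCutset_of_wheel {W : SimpleGraph V} {n : ℕ} (hn : 2 ≤ n)
    (g : cycleGraph (n + 2) ↪g W) (x : V) (hcover : ∀ v, v = x ∨ v ∈ range g)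
    (hdeg : 3 ≤ {i | W.Adj x (g i)}.ncard) : ¬ HasCliqueCutset W := by
  rintro ⟨A, B, C, hcut, hC⟩
  obtain ⟨d, hd⟩ := IsClique.subset_pair_of_cycleGraph hn (s := g ⁻¹' C)
    fun i hi j hj hij => g.map_adj_iff.1 (hC hi hj (g.injective.ne hij))
  have hnotC : ∀ i ∉ ({d, d + 1} : Set _), g i ∉ C := fun i hi hiC => hi (hd hiC)
  have hpair : ({d, d + 1} : Set (Fin (n + 2))).ncard < {i | W.Adj x (g i)}.ncard :=
    (ncard_insert_le _ _).trans_lt (by rw [ncard_singleton]; omega)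
  obtain ⟨i₀, hxi₀, hi₀⟩ := exists_mem_notMem_of_ncard_lt_ncard hpair
  have hpath : ∀ i ∉ ({d, d + 1} : Set _), (g i ∈ A ↔ g (d + 2) ∈ A) := by
    intro i
    refine Fin.cyclic_induction (d + 2)
      (P := fun i => i ∉ ({d, d + 1} : Set _) → (g i ∈ A ↔ g (d + 2) ∈ A))
      (fun _ => Iff.rfl) (fun j hj hjA hj₁ => ?_) i
    have hj' : j ∉ ({d, d + 1} : Set _) := by
      simp only [mem_insert_iff, mem_singleton_iff, not_or] at hj₁ ⊢
      grind
    exact (hcut.mem_iff_of_adj (g.map_adj_iff.2 (cycleGraph_adj_add_one j)) (hnotC j hj')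
      (hnotC _ hj₁)).symm.trans (hjA hj')
  refine hcut.not_forall_mem_iff (g (d + 2)) fun u hu => ?_
  rcases hcover u with rfl | ⟨i, rfl⟩
  · exact (hcut.mem_iff_of_adj hxi₀ hu (hnotC i₀ hi₀)).trans (hpath i₀ hi₀)
  by_cases hi : i ∈ ({d, d + 1} : Set _)
  · obtain ⟨j, hj, hij⟩ := cycleGraph_exists_adj_notMem_pair (by omega) hi
    exact (hcut.mem_iff_of_adj (g.map_adj_iff.2 hij) hu (hnotC j hj)).trans (hpath j hj)
  · exact hpath i hi

theorem stmt18_general (G : SimpleGraph V) (n : ℕ) (hn : 4 ≤ n)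
    (f : cycleGraph n ↪g G) (x : V)
    (hdeg : 3 ≤ {i : Fin n | G.Adj x (f i)}.ncard) :
    ¬ HasCliqueCutset (G.induce (Set.range ⇑f ∪ {x})) := by
  obtain ⟨m, rfl⟩ : ∃ m, n = m + 2 := ⟨n - 2, by omega⟩
  refine not_hasCliqueCutset_of_wheel (by omega)
    (f.codRestrict _ fun i => .inl (mem_range_self i)) ⟨x, .inr rfl⟩ ?_ hdeg
  rintro ⟨v, ⟨i, rfl⟩ | rfl⟩
  · exact .inr ⟨i, rfl⟩
  · exact .inl rfl

theorem stmt18 (G : SimpleGraph V) (n : ℕ) (hn : 4 ≤ n)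
    (f : cycleGraph n ↪g G) (x : V) (hx : x ∉ Set.range ⇑f)
    (hdeg : 3 ≤ {i : Fin n | G.Adj x (f i)}.ncard) :
    ¬ HasCliqueCutset (G.induce (Set.range ⇑f ∪ {x})) :=
  stmt18_general G n hn f x hdeg
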